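/- arXiv:1107.4717 — 4 statements merged into one kernel-verified Lean document; each statement's English description precedes it below -/
import Mathlib

section
/- Let V be a finite set with |V| = k ≥ 3, let ℓ : Fin k → V be a bijection, and let E = { {ℓ(i), ℓ(i+1)} : 0 ≤ i ≤ k−2 } be the associated Hamiltonian path edge set. Let e = {ℓ(0), ℓ(1)} be the pendant edge of the path at ℓ(0). Then the set of unordered pairs e′ of distinct elements of V such that (E \ {e}) ∪ {e′} is realized as a Hamiltonian path by some bijection Fin k → V has exactly two elements, namely e itself and {ℓ(0), ℓ(k−1)}. (This is the paper's claim that when the deleted transposition is an 'endpoint', there are exactly two internal cofaces that can contribute a non-zero coefficient.) -/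
/-- A bijection `ℓ : Fin k ≃ V` realizes an edge set `E` (a set of unordered pairs of
elements of `V`) as a Hamiltonian path if `E = { {ℓ i, ℓ (i+1)} : 0 ≤ i ≤ k − 2 }`. -/
def realizesPath {V : Type*} {k : ℕ} (ℓ : Fin k ≃ V) (E : Set (Sym2 V)) : Prop :=
  E = { e | ∃ i : ℕ, ∃ h : i + 1 < k, e = s(ℓ ⟨i, Nat.lt_of_succ_lt h⟩, ℓ ⟨i + 1, h⟩) }

lemma mem_pathEdges {V : Type*} {k : ℕ} (m : Fin k ≃ V) (x y : V) :
    (s(x, y) ∈ { e : Sym2 V | ∃ i : ℕ, ∃ h : i + 1 < k,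
        e = s(m ⟨i, Nat.lt_of_succ_lt h⟩, m ⟨i + 1, h⟩) }) ↔
    ((m.symm x : ℕ) + 1 = (m.symm y : ℕ) ∨ (m.symm y : ℕ) + 1 = (m.symm x : ℕ)) := by
  constructor
  · rintro ⟨i, h, hs⟩
    rw [Sym2.eq_iff] at hs
    rcases hs with ⟨hx, hy⟩ | ⟨hx, hy⟩ <;> subst hx <;> subst hy <;> simp
  · have key : ∀ u v : V, (m.symm u : ℕ) + 1 = (m.symm v : ℕ) →
        s(u, v) ∈ { e : Sym2 V | ∃ i : ℕ, ∃ h : i + 1 < k,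
          e = s(m ⟨i, Nat.lt_of_succ_lt h⟩, m ⟨i + 1, h⟩) } := by
      intro u v huv
      refine ⟨(m.symm u : ℕ), by have := (m.symm v).isLt; omega, ?_⟩
      have h2 : (⟨(m.symm u : ℕ) + 1, by have := (m.symm v).isLt; omega⟩ : Fin k) = m.symm v :=
        Fin.ext (by simpa using huv)
      rw [Sym2.eq_iff]
      left
      constructor
      · conv_lhs => rw [← m.apply_symm_apply u]
      · have h3 := congrArg m h2
        rw [m.apply_symm_apply] at h3
        exact h3.symm
    rintro (huv | huv)
    · exact key x y huv
    · have := key y x huv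
      rwa [Sym2.eq_swap] at this

lemma steps_up {k : ℕ} (p : ℕ → ℕ)
    (hinj : ∀ i j, i < k → j < k → p i = p j → i = j)
    (hadj : ∀ i, 1 ≤ i → i + 1 < k → p (i + 1) = p i + 1 ∨ p i = p (i + 1) + 1)
    (h2 : p 2 = p 1 + 1) :
    ∀ i, 1 ≤ i → i < k → p i + 1 = p 1 + i := by
  intro i
  induction i using Nat.strong_induction_on with
  | _ i IH =>
    intro h1 hik
    match i, h1 with
    | 1, _ => omega
    | 2, _ => omega
    | (j + 3), _ =>
      have I2 := IH (j + 2) (by omega) (by omega) (by omega)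
      have I1 := IH (j + 1) (by omega) (by omega) (by omega)
      rcases hadj (j + 2) (by omega) (by omega) with h | h
      all_goals rw [show j + 2 + 1 = j + 3 from by omega] at h
      · omega
      · have heq : p (j + 3) = p (j + 1) := by omega
        have := hinj (j + 3) (j + 1) (by omega) (by omega) heq
        omega

lemma steps_down {k : ℕ} (p : ℕ → ℕ)
    (hinj : ∀ i j, i < k → j < k → p i = p j → i = j)
    (hadj : ∀ i, 1 ≤ i → i + 1 < k → p (i + 1) = p i + 1 ∨ p i = p (i + 1) + 1)
    (h2 : p 1 = p 2 + 1) :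
    ∀ i, 1 ≤ i → i < k → p i + i = p 1 + 1 := by
  intro i
  induction i using Nat.strong_induction_on with
  | _ i IH =>
    intro h1 hik
    match i, h1 with
    | 1, _ => omega
    | 2, _ => omega
    | (j + 3), _ =>
      have I2 := IH (j + 2) (by omega) (by omega) (by omega)
      have I1 := IH (j + 1) (by omega) (by omega) (by omega)
      rcases hadj (j + 2) (by omega) (by omega) with h | h
      all_goals rw [show j + 2 + 1 = j + 3 from by omega] at h
      · have heq : p (j + 3) = p (j + 1) := by omega
        have := hinj (j + 3) (j + 1) (by omega) (by omega) heq
        omega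
      · omega

/-- Let `ℓ : Fin k ≃ V` (with `|V| = k ≥ 3`) realize the Hamiltonian path edge set `E`,
and let `e = {ℓ 0, ℓ 1}` be the pendant edge at `ℓ 0`.  Then the unordered pairs `e'` of
distinct elements of `V` such that `(E \ {e}) ∪ {e'}` is realized as a Hamiltonian path by
some bijection are exactly the two pairs `e` and `{ℓ 0, ℓ (k−1)}`. -/
theorem pendant_replacements {V : Type*} [Fintype V] {k : ℕ} (hk : 3 ≤ k)
    (hcard : Fintype.card V = k) (ℓ : Fin k ≃ V) (E : Set (Sym2 V))
    (hE : realizesPath ℓ E)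
    (e : Sym2 V) (he : e = s(ℓ ⟨0, by omega⟩, ℓ ⟨1, by omega⟩)) :
    { e' : Sym2 V | ¬ e'.IsDiag ∧ ∃ m : Fin k ≃ V, realizesPath m ((E \ {e}) ∪ {e'}) }
        = {e, s(ℓ ⟨0, by omega⟩, ℓ ⟨k - 1, by omega⟩)} ∧
      e ≠ s(ℓ ⟨0, by omega⟩, ℓ ⟨k - 1, by omega⟩) := by
  subst he
  have hk0 : 0 < k := by omega
  have hlinj : ∀ (a b : ℕ) (ha : a < k) (hb : b < k), ℓ ⟨a, ha⟩ = ℓ ⟨b, hb⟩ → a = b := by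
    intro a b ha hb h
    have := ℓ.injective h
    simpa [Fin.ext_iff] using this
  have hsym : ∀ (a b c d : ℕ) (ha : a < k) (hb : b < k) (hc : c < k) (hd : d < k),
      a = c → b = d → s(ℓ ⟨a, ha⟩, ℓ ⟨b, hb⟩) = s(ℓ ⟨c, hc⟩, ℓ ⟨d, hd⟩) := by
    rintro a b c d ha hb hc hd rfl rfl
    rfl
  have hsym' : ∀ (a b c d : ℕ) (ha : a < k) (hb : b < k) (hc : c < k) (hd : d < k),
      a = d → b = c → s(ℓ ⟨a, ha⟩, ℓ ⟨b, hb⟩) = s(ℓ ⟨c, hc⟩, ℓ ⟨d, hd⟩) := by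
    rintro a b c d ha hb hc hd rfl rfl
    exact Sym2.eq_swap
  have henf : s(ℓ ⟨0, by omega⟩, ℓ ⟨1, by omega⟩) ≠ s(ℓ ⟨0, by omega⟩, ℓ ⟨k - 1, by omega⟩) := by
    intro hcon
    rcases Sym2.eq_iff.1 hcon with ⟨h1, h2⟩ | ⟨h1, h2⟩
    · exact absurd (hlinj _ _ _ _ h2) (by omega)
    · exact absurd (hlinj _ _ _ _ h1) (by omega)
  have hEe : s(ℓ ⟨0, by omega⟩, ℓ ⟨1, by omega⟩) ∈ E := by
    rw [hE]
    exact ⟨0, by omega, hsym _ _ _ _ _ _ _ _ rfl (by omega)⟩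
  have hfE : s(ℓ ⟨0, hk0⟩, ℓ ⟨k - 1, by omega⟩) ∉ E := by
    rw [hE]
    rintro ⟨i, h, hs⟩
    rcases Sym2.eq_iff.1 hs with ⟨h1, h2⟩ | ⟨h1, h2⟩
    · have e1 := hlinj _ _ _ _ h1
      have e2 := hlinj _ _ _ _ h2
      omega
    · have e1 := hlinj _ _ _ _ h1
      omega
  have hedge : ∀ i (h1 : 1 ≤ i) (h2 : i + 1 < k),
      s(ℓ ⟨i, Nat.lt_of_succ_lt h2⟩, ℓ ⟨i + 1, h2⟩) ∈ E \ {s(ℓ ⟨0, by omega⟩, ℓ ⟨1, by omega⟩)} := by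
    intro i h1 h2
    constructor
    · rw [hE]; exact ⟨i, h2, rfl⟩
    · simp only [Set.mem_singleton_iff]
      intro hcon
      rcases Sym2.eq_iff.1 hcon with ⟨a, b⟩ | ⟨a, b⟩
      · exact absurd (hlinj _ _ _ _ a) (by omega)
      · exact absurd (hlinj _ _ _ _ b) (by omega)
  constructor
  swap
  · exact henf
  ext e'
  simp only [Set.mem_setOf_eq, Set.mem_insert_iff, Set.mem_singleton_iff]
  constructor
  · rintro ⟨hd, m, hm⟩
    rw [realizesPath] at hm
    set p : ℕ → ℕ := fun i => (m.symm (ℓ ⟨i % k, Nat.mod_lt i hk0⟩) : ℕ) with hp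
    have hpv : ∀ i (h : i < k), p i = (m.symm (ℓ ⟨i, h⟩) : ℕ) := by
      intro i h
      simp only [hp, Nat.mod_eq_of_lt h]
    have hpk : ∀ i, p i < k := fun i => (m.symm _).isLt
    have hpinj : ∀ i j, i < k → j < k → p i = p j → i = j := by
      intro i j hi hj hpq
      rw [hpv i hi, hpv j hj] at hpq
      exact hlinj _ _ _ _ (m.symm.injective (Fin.ext hpq))
    have hadj : ∀ i, 1 ≤ i → i + 1 < k → (p (i + 1) = p i + 1 ∨ p i = p (i + 1) + 1) := by
      intro i h1 h2
      have hmem : s(ℓ ⟨i, Nat.lt_of_succ_lt h2⟩, ℓ ⟨i + 1, h2⟩) ∈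
          (E \ {s(ℓ ⟨0, by omega⟩, ℓ ⟨1, by omega⟩)}) ∪ {e'} :=
        Set.mem_union_left _ (hedge i h1 h2)
      rw [hm] at hmem
      have hml := (mem_pathEdges m _ _).1 hmem
      rw [hpv i (Nat.lt_of_succ_lt h2), hpv (i + 1) h2]
      omega
    have key : (p 0 + 1 = p 1 ∨ p 1 + 1 = p 0) ∨ (p 0 + 1 = p (k - 1) ∨ p (k - 1) + 1 = p 0) := by
      rcases hadj 1 (le_refl 1) (by omega) with h2 | h2
      · have hs := steps_up p hpinj hadj h2
        have hk1 := hs (k - 1) (by omega) (by omega)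
        have hp1 : p 1 ≤ 1 := by have := hpk (k - 1); omega
        by_cases h1 : p 1 = 1
        · have hp0 : p 0 = 0 := by
            by_contra h0
            have hb := hpk 0
            have hval : p (p 0) = p 0 := by have := hs (p 0) (by omega) hb; omega
            have := hpinj 0 (p 0) hk0 hb hval.symm
            omega
          left; left; omega
        · have hp0 : p 0 = k - 1 := by
            by_contra h0
            have hb := hpk 0
            have hlt : p 0 + 1 < k := by omega
            have hval : p (p 0 + 1) = p 0 := by have := hs (p 0 + 1) (by omega) hlt; omega
            have := hpinj 0 (p 0 + 1) hk0 hlt hval.symm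
            omega
          right; right; omega
      · have hs := steps_down p hpinj hadj h2
        have hk1 := hs (k - 1) (by omega) (by omega)
        by_cases h1 : p 1 = k - 1
        · have hp0 : p 0 = 0 := by
            by_contra h0
            have hb := hpk 0
            have hlt : k - p 0 < k := by omega
            have hval : p (k - p 0) = p 0 := by
              have := hs (k - p 0) (by omega) hlt; omega
            have := hpinj 0 (k - p 0) hk0 hlt hval.symm
            omega
          right; left; omega
        · have h1' : p 1 = k - 2 := by have := hpk 1; omega
          have hp0 : p 0 = k - 1 := by
            by_contra h0
            have hb := hpk 0
            have hlt : k - 1 - p 0 < k := by omega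
            have hval : p (k - 1 - p 0) = p 0 := by
              have := hs (k - 1 - p 0) (by omega) hlt; omega
            have := hpinj 0 (k - 1 - p 0) hk0 hlt hval.symm
            omega
          left; right; omega
    rcases key with hkey | hkey
    · left
      have hmem : s(ℓ ⟨0, by omega⟩, ℓ ⟨1, by omega⟩) ∈
          (E \ {s(ℓ ⟨0, by omega⟩, ℓ ⟨1, by omega⟩)}) ∪ {e'} := by
        rw [hm]
        apply (mem_pathEdges m _ _).2
        rw [← hpv 0 hk0, ← hpv 1 (by omega)]
        exact hkey
      rcases hmem with h | h
      · exact absurd h (by simp)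
      · exact (Set.mem_singleton_iff.1 h).symm
    · right
      have hmem : s(ℓ ⟨0, hk0⟩, ℓ ⟨k - 1, by omega⟩) ∈
          (E \ {s(ℓ ⟨0, by omega⟩, ℓ ⟨1, by omega⟩)}) ∪ {e'} := by
        rw [hm]
        apply (mem_pathEdges m _ _).2
        rw [← hpv 0 hk0, ← hpv (k - 1) (by omega)]
        exact hkey
      rcases hmem with h | h
      · exact absurd h.1 hfE
      · rw [Set.mem_singleton_iff] at h
        rw [← h]
  · haveI : NeZero k := ⟨by omega⟩
    rintro (rfl | rfl)
    · refine ⟨?_, ℓ, ?_⟩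
      · rw [Sym2.mk_isDiag_iff]
        intro h
        exact absurd (hlinj _ _ _ _ h) (by omega)
      · rw [Set.diff_union_of_subset (Set.singleton_subset_iff.2 hEe)]
        exact hE
    · refine ⟨?_, (Equiv.addRight (1 : Fin k)).trans ℓ, ?_⟩
      · rw [Sym2.mk_isDiag_iff]
        intro h
        exact absurd (hlinj _ _ _ _ h) (by omega)
      · set m : Fin k ≃ V := (Equiv.addRight (1 : Fin k)).trans ℓ with hmdef
        have hone : (1 : Fin k).val = 1 := by
          rw [Fin.val_one' k]; exact Nat.mod_eq_of_lt (by omega)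
        have hmval : ∀ i (h : i < k), m ⟨i, h⟩ = ℓ ⟨(i + 1) % k, Nat.mod_lt _ hk0⟩ := by
          intro i h
          show ℓ ((⟨i, h⟩ : Fin k) + 1) = _
          congr 1
          rw [Fin.ext_iff, Fin.add_def, hone]
        have hm1 : ∀ i (h : i + 1 < k), m ⟨i, Nat.lt_of_succ_lt h⟩ = ℓ ⟨i + 1, h⟩ := by
          intro i h
          rw [hmval]
          congr 1
          exact Fin.ext (Nat.mod_eq_of_lt h)
        have hm2 : m ⟨k - 1, by omega⟩ = ℓ ⟨0, hk0⟩ := by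
          rw [hmval]
          congr 1
          refine Fin.ext ?_
          show (k - 1 + 1) % k = 0
          rw [show k - 1 + 1 = k from by omega]
          exact Nat.mod_self k
        rw [realizesPath]
        ext x
        constructor
        · rintro (⟨hxE, hxe⟩ | hx)
          · rw [hE] at hxE
            obtain ⟨i, h, rfl⟩ := hxE
            have hi1 : 1 ≤ i := by
              by_contra h0
              apply hxe
              rw [Set.mem_singleton_iff]
              exact hsym _ _ _ _ _ _ _ _ (by omega) (by omega)
            have hpf : i - 1 + 1 < k := by omega
            refine ⟨i - 1, hpf, ?_⟩
            rw [hm1 (i - 1) hpf, hmval (i - 1 + 1) (by omega)]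
            exact hsym _ _ _ _ _ _ _ _ (by omega) (by rw [Nat.mod_eq_of_lt (by omega)]; omega)
          · rw [Set.mem_singleton_iff] at hx
            subst hx
            have hpf : k - 2 + 1 < k := by omega
            refine ⟨k - 2, hpf, ?_⟩
            rw [hm1 (k - 2) hpf, hmval (k - 2 + 1) (by omega)]
            refine hsym' _ _ _ _ _ _ _ _ ?_ ?_
            · rw [show k - 2 + 1 + 1 = k from by omega, Nat.mod_self]
            · omega
        · rintro ⟨i, h, rfl⟩
          rw [hm1 i h, hmval (i + 1) h]
          by_cases hik : i + 1 < k - 1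
          · left
            have hmm := hedge (i + 1) (by omega) (by omega)
            have heq : s(ℓ ⟨i + 1, h⟩, ℓ ⟨(i + 1 + 1) % k, Nat.mod_lt _ hk0⟩) =
                s(ℓ ⟨i + 1, by omega⟩, ℓ ⟨i + 1 + 1, by omega⟩) :=
              hsym _ _ _ _ _ _ _ _ rfl (Nat.mod_eq_of_lt (by omega))
            rw [heq]
            exact hmm
          · right
            rw [Set.mem_singleton_iff]
            refine hsym' _ _ _ _ _ _ _ _ ?_ ?_
            · omega
            · rw [show i + 1 + 1 = k from by omega, Nat.mod_self]
end

section
/- Let V be a finite set with |V| = k ≥ 4, let ℓ : Fin k → V be a bijection, and let E = { {ℓ(i), ℓ(i+1)} : 0 ≤ i ≤ k−2 } be the associated Hamiltonian path edge set. Let e = {ℓ(j), ℓ(j+1)} be an internal edge, i.e. 1 ≤ j ≤ k−3. Then the set of unordered pairs e′ of distinct elements of V such that (E \ {e}) ∪ {e′} is realized as a Hamiltonian path by some bijection Fin k → V has exactly four elements, namely {ℓ(j), ℓ(j+1)}, {ℓ(0), ℓ(j+1)}, {ℓ(j), ℓ(k−1)}, and {ℓ(0), ℓ(k−1)}. (This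 is the paper's claim that when removing the transposition splits the sequential collection into two disjoint sequential collections, exactly four transpositions reattach them, giving four internal cofaces with possibly non-zero coefficient.) -/
theorem unit_step_walk_linear {f : ℕ → ℕ} {a b : ℕ} (hinj : Set.InjOn f (Set.Icc a b))
    (hstep : ∀ i, a ≤ i → i < b → f i + 1 = f (i + 1) ∨ f (i + 1) + 1 = f i) :
    (∀ i, a ≤ i → i ≤ b → f i = f a + (i - a)) ∨ (∀ i, a ≤ i → i ≤ b → f i + (i - a) = f a) := by
  induction b with
  | zero => exact Or.inl fun i h₁ h₂ => by rw [show i = a by omega, Nat.sub_self, add_zero]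
  | succ b ih =>
    rcases Nat.lt_or_ge b a with hba | hab
    · exact Or.inl fun i h₁ h₂ => by rw [show i = a by omega, Nat.sub_self, add_zero]
    have ih := ih (hinj.mono (Set.Icc_subset_Icc_right b.le_succ))
      (fun i h₁ h₂ => hstep i h₁ (by omega))
    -- a step back would revisit `f (b - 1)`, unless `b = a`
    have hback : a < b → f (b + 1) ≠ f (b - 1) := fun h heq => by
      have := hinj ⟨by omega, le_rfl⟩ ⟨by omega, by omega⟩ heq
      omega
    have hlast : ∀ i, a ≤ i → i ≤ b + 1 → i ≤ b ∨ i = b + 1 := fun i _ _ => by omega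
    rcases hstep b hab (by omega) with hs | hs <;> rcases ih with h | h
    · exact Or.inl fun i h₁ h₂ => by
        rcases hlast i h₁ h₂ with hi | rfl
        · exact h i h₁ hi
        · have := h b hab le_rfl; omega
    · rcases Nat.lt_or_ge a b with hab' | hba
      · exact absurd (by have := h (b - 1) (by omega) (by omega); have := h b hab le_rfl; omega)
          (hback hab')
      · rw [show b = a by omega] at hs
        exact Or.inl fun i h₁ h₂ => by
          obtain rfl | rfl : i = a ∨ i = a + 1 := by omega
          all_goals omega
    · rcases Nat.lt_or_ge a b with hab' | hba
      · exact absurd (by have := h (b - 1) (by omega) (by omega); have := h b hab le_rfl; omega)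
          (hback hab')
      · rw [show b = a by omega] at hs
        exact Or.inr fun i h₁ h₂ => by
          obtain rfl | rfl : i = a ∨ i = a + 1 := by omega
          all_goals omega
    · exact Or.inr fun i h₁ h₂ => by
        rcases hlast i h₁ h₂ with hi | rfl
        · exact h i h₁ hi
        · have := h b hab le_rfl; omega

theorem iff_of_forall_iff_succ {p : ℕ → Prop} {a b : ℕ}
    (h : ∀ i, a ≤ i → i < b → (p i ↔ p (i + 1))) : ∀ i, a ≤ i → i ≤ b → (p i ↔ p a) := by
  intro i hai
  induction i, hai using Nat.le_induction with
  | base => exact fun _ => Iff.rfl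
  | succ i hai ih => exact fun hib => (h i hai (by omega)).symm.trans (ih (by omega))

theorem walk_endpoints_of_preimage_Icc {f : ℕ → ℕ} {k a b lo hi : ℕ}
    (hf : Set.BijOn f (Set.Iio k) (Set.Iio k)) (hb : b < k) (hlo : lo ≤ hi) (hhi : hi < k)
    (hstep : ∀ i, a ≤ i → i < b → f i + 1 = f (i + 1) ∨ f (i + 1) + 1 = f i)
    (hpre : ∀ x < k, (a ≤ x ∧ x ≤ b ↔ lo ≤ f x ∧ f x ≤ hi)) :
    (f a = lo ∧ f b = hi) ∨ (f a = hi ∧ f b = lo) := by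
  obtain ⟨x, hx, hfx⟩ := hf.surjOn (show lo ∈ Set.Iio k from lt_of_le_of_lt hlo hhi)
  obtain ⟨y, hy, hfy⟩ := hf.surjOn (show hi ∈ Set.Iio k from hhi)
  have hx' := hpre x hx
  have hy' := hpre y hy
  have hb' := hpre b hb
  have ha' := hpre a (by omega)
  rcases unit_step_walk_linear (hf.injOn.mono fun i hi => lt_of_le_of_lt hi.2 hb) hstep with h | h
  all_goals
    have := h x (by omega) (by omega)
    have := h y (by omega) (by omega)
    have := h b (by omega) le_rfl
    omega

/-- `a` and `b` are adjacent in the path `0 — 1 — ⋯` with the edge `{j, j + 1}` cut out. -/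
def SplitAdj (j a b : ℕ) : Prop :=
  (a + 1 = b ∨ b + 1 = a) ∧ (a ≤ j ↔ b ≤ j)

theorem splitAdj_cut_endpoints {f : ℕ → ℕ} {k j i₀ : ℕ}
    (hf : Set.BijOn f (Set.Iio k) (Set.Iio k)) (hj : j + 1 < k) (hi₀ : i₀ + 1 < k)
    (hadj : ∀ i, i + 1 < k → i ≠ i₀ → SplitAdj j (f i) (f (i + 1))) :
    ((f i₀ = 0 ∨ f i₀ = j) ∧ (f (i₀ + 1) = j + 1 ∨ f (i₀ + 1) = k - 1)) ∨
      ((f i₀ = j + 1 ∨ f i₀ = k - 1) ∧ (f (i₀ + 1) = 0 ∨ f (i₀ + 1) = j)) := by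
  have hlt : ∀ x < k, f x < k := fun x hx => hf.mapsTo hx
  have hside₁ := iff_of_forall_iff_succ (p := fun x => f x ≤ j) (a := 0) (b := i₀)
    fun i _ hi => (hadj i (by omega) (by omega)).2
  have hside₂ := iff_of_forall_iff_succ (p := fun x => f x ≤ j) (a := i₀ + 1) (b := k - 1)
    fun i hi _ => (hadj i (by omega) (by omega)).2
  have hseg : ∀ z < k, (z ≤ i₀ → (f z ≤ j ↔ f 0 ≤ j)) ∧ (i₀ < z → (f z ≤ j ↔ f (i₀ + 1) ≤ j)) :=
    fun z hz => ⟨hside₁ z z.zero_le, fun h => hside₂ z h (by omega)⟩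
  obtain ⟨x, hx, hfx⟩ := hf.surjOn (show 0 ∈ Set.Iio k by simp only [Set.mem_Iio]; omega)
  obtain ⟨y, hy, hfy⟩ := hf.surjOn (show k - 1 ∈ Set.Iio k by simp only [Set.mem_Iio]; omega)
  -- the values `0` and `k - 1` force the two segments onto opposite sides of the cut
  have hcut : ∀ z < k, (z ≤ i₀ ↔ (f z ≤ j ↔ f 0 ≤ j)) := by
    have := hseg x hx
    have := hseg y hy
    exact fun z hz => by have := hseg z hz; omega
  have hstep : ∀ i, i + 1 < k → i ≠ i₀ → f i + 1 = f (i + 1) ∨ f (i + 1) + 1 = f i :=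
    fun i h h' => (hadj i h h').1
  rcases le_or_gt (f 0) j with h0 | h0
  · have b₁ := walk_endpoints_of_preimage_Icc (a := 0) (b := i₀) (lo := 0) (hi := j) hf
      (by omega) (by omega) (by omega) (fun i _ hi => hstep i (by omega) (by omega))
      (fun x hx => by have := hcut x hx; have := hlt x hx; omega)
    have b₂ := walk_endpoints_of_preimage_Icc (a := i₀ + 1) (b := k - 1) (lo := j + 1)
      (hi := k - 1) hf
      (by omega) (by omega) (by omega) (fun i hi _ => hstep i (by omega) (by omega))
      (fun x hx => by have := hcut x hx; have := hlt x hx; omega)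
    omega
  · have b₁ := walk_endpoints_of_preimage_Icc (a := 0) (b := i₀) (lo := j + 1) (hi := k - 1) hf
      (by omega) (by omega) (by omega) (fun i _ hi => hstep i (by omega) (by omega))
      (fun x hx => by have := hcut x hx; have := hlt x hx; omega)
    have b₂ := walk_endpoints_of_preimage_Icc (a := i₀ + 1) (b := k - 1) (lo := 0) (hi := j) hf
      (by omega) (by omega) (by omega) (fun i hi _ => hstep i (by omega) (by omega))
      (fun x hx => by have := hcut x hx; have := hlt x hx; omega)
    omega

def permVal {k : ℕ} (σ : Equiv.Perm (Fin k)) (i : ℕ) : ℕ :=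
  if h : i < k then σ ⟨i, h⟩ else i

theorem permVal_of_lt {k : ℕ} (σ : Equiv.Perm (Fin k)) {i : ℕ} (h : i < k) :
    permVal σ i = σ ⟨i, h⟩ :=
  dif_pos h

theorem bijOn_permVal {k : ℕ} (σ : Equiv.Perm (Fin k)) :
    Set.BijOn (permVal σ) (Set.Iio k) (Set.Iio k) := by
  refine ⟨fun i hi => ?_, fun a ha b hb hab => ?_, fun v hv => ?_⟩
  · simp [permVal_of_lt σ (show i < k from hi)]
  · simpa [permVal_of_lt σ (show a < k from ha), permVal_of_lt σ (show b < k from hb),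
      Fin.val_inj] using hab
  · exact ⟨σ.symm ⟨v, hv⟩, by simp, by simp [permVal_of_lt]⟩

theorem Fin.exists_sym2_eq_mk_succ {k : ℕ} {a b : Fin k}
    (h : (a : ℕ) + 1 = b ∨ (b : ℕ) + 1 = a) :
    ∃ s, ∃ hs : s + 1 < k, s(a, b) = s(⟨s, by omega⟩, ⟨s + 1, hs⟩) :=
  ⟨min a b, by omega, by simp only [Sym2.eq_iff, Fin.ext_iff]; omega⟩

section PathEdges

variable {V : Type*} {k : ℕ} {ℓ : Fin k ≃ V} {E : Set (Sym2 V)} {j : ℕ} {e : Sym2 V}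

theorem mk_mem_diff_iff (hE : realizesPath ℓ E) (hj : j + 1 < k)
    (he : e = s(ℓ ⟨j, by omega⟩, ℓ ⟨j + 1, hj⟩)) (a b : Fin k) :
    s(ℓ a, ℓ b) ∈ E \ {e} ↔ SplitAdj j a b := by
  subst hE he
  simp only [Set.mem_sdiff, Set.mem_ofPred_eq, Set.mem_singleton_iff, Sym2.eq_iff,
    ℓ.apply_eq_iff_eq, Fin.ext_iff, SplitAdj]
  constructor
  · rintro ⟨⟨i, hi, h⟩, hne⟩
    omega
  · intro h
    exact ⟨⟨min a b, by omega, by omega⟩, by omega⟩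

theorem realizesPath_trans_of_involutive (hE : realizesPath ℓ E) (hj : j + 1 < k)
    (he : e = s(ℓ ⟨j, by omega⟩, ℓ ⟨j + 1, hj⟩)) {π : Equiv.Perm (Fin k)}
    (hπ : Function.Involutive π)
    (hadj : ∀ i (hi : i + 1 < k), i ≠ j → SplitAdj j (π ⟨i, by omega⟩) (π ⟨i + 1, hi⟩)) :
    realizesPath (π.trans ℓ) ((E \ {e}) ∪ {s(ℓ (π ⟨j, by omega⟩), ℓ (π ⟨j + 1, hj⟩))}) := by
  ext x
  constructor
  · rintro (hx | rfl)
    · obtain ⟨t, ht, rfl⟩ : ∃ t, ∃ ht : t + 1 < k, x = s(ℓ ⟨t, by omega⟩, ℓ ⟨t + 1, ht⟩) :=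
        hE ▸ hx.1
      have htj : t ≠ j := by
        have := (mk_mem_diff_iff hE hj he _ _).1 hx
        simp only [SplitAdj] at this
        omega
      -- `π` carries the edge at `t` to some edge at `s`, and back since it is an involution
      obtain ⟨s, hs, hst⟩ := Fin.exists_sym2_eq_mk_succ (hadj t ht htj).1
      refine ⟨s, hs, ?_⟩
      have := congrArg (Sym2.map (π.trans ℓ)) hst
      simp only [Sym2.map_mk, Equiv.trans_apply, hπ _] at this
      exact this
    · exact ⟨j, hj, rfl⟩
  · rintro ⟨i, hi, rfl⟩
    by_cases hij : i = j
    · subst hij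
      exact Or.inr rfl
    · exact Or.inl ((mk_mem_diff_iff hE hj he _ _).2 (hadj i hi hij))

end PathEdges

def reattachEdge {V : Type*} {k j : ℕ} (ℓ : Fin k ≃ V) (hj : j + 1 < k) (r₁ r₂ : Bool) : Sym2 V :=
  s(ℓ (if r₁ then ⟨0, by omega⟩ else ⟨j, by omega⟩),
    ℓ (if r₂ then ⟨k - 1, by omega⟩ else ⟨j + 1, hj⟩))

section Reattach

variable {V : Type*} {k : ℕ} {ℓ : Fin k ≃ V} {E : Set (Sym2 V)} {j : ℕ} {e : Sym2 V}

theorem exists_eq_reattachEdge_of_realizesPath (hE : realizesPath ℓ E) (hj : j + 1 < k)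
    (he : e = s(ℓ ⟨j, by omega⟩, ℓ ⟨j + 1, hj⟩)) {m : Fin k ≃ V} {e' : Sym2 V}
    (hm : realizesPath m ((E \ {e}) ∪ {e'})) :
    ∃ r₁ r₂ : Bool, e' = reattachEdge ℓ hj r₁ r₂ := by
  rw [realizesPath] at hm
  set σ := m.trans ℓ.symm
  have hmσ : ∀ x, m x = ℓ (σ x) := by simp [σ]
  obtain ⟨i₀, hi₀, rfl⟩ : ∃ i₀, ∃ hi₀ : i₀ + 1 < k, e' = s(m ⟨i₀, by omega⟩, m ⟨i₀ + 1, hi₀⟩) :=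
    hm ▸ Set.mem_union_right _ (Set.mem_singleton e')
  have hadj : ∀ i, i + 1 < k → i ≠ i₀ → SplitAdj j (permVal σ i) (permVal σ (i + 1)) := by
    intro i hi hii
    have hmem : s(m ⟨i, by omega⟩, m ⟨i + 1, hi⟩) ∈
        (E \ {e}) ∪ {s(m ⟨i₀, by omega⟩, m ⟨i₀ + 1, hi₀⟩)} :=
      hm ▸ ⟨i, hi, rfl⟩
    rw [permVal_of_lt σ (by omega), permVal_of_lt σ hi]
    rcases hmem with h | h
    · rwa [hmσ, hmσ, mk_mem_diff_iff hE hj he] at h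
    · simp only [Set.mem_singleton_iff, Sym2.eq_iff, m.apply_eq_iff_eq, Fin.ext_iff] at h
      omega
  have hends := splitAdj_cut_endpoints (bijOn_permVal σ) hj hi₀ hadj
  rw [permVal_of_lt σ (by omega), permVal_of_lt σ hi₀] at hends
  -- `r₁`, `r₂` record whether `e'` uses the outer ends `0`, `k - 1`
  refine ⟨σ ⟨i₀, by omega⟩ = (0 : ℕ) ∨ σ ⟨i₀ + 1, hi₀⟩ = (0 : ℕ),
    σ ⟨i₀, by omega⟩ = k - 1 ∨ σ ⟨i₀ + 1, hi₀⟩ = k - 1, ?_⟩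
  simp only [reattachEdge, hmσ, Sym2.eq_iff, ℓ.apply_eq_iff_eq, decide_eq_true_eq]
  split_ifs <;> simp only [Fin.ext_iff] <;> omega

/-- The order `0, …, k - 1` with the segment `[0, j]` reversed if `r₁` and the segment
`[j + 1, k - 1]` reversed if `r₂`. -/
def reattach (k j : ℕ) (r₁ r₂ : Bool) (i : ℕ) : ℕ :=
  if i ≤ j then (if r₁ then j - i else i) else (if r₂ then k + j - i else i)

def reattachPerm (hj : j < k) (r₁ r₂ : Bool) : Equiv.Perm (Fin k) :=
  Function.Involutive.toPerm
    (fun x => ⟨reattach k j r₁ r₂ x, by unfold reattach; split_ifs <;> omega⟩)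
    fun x => Fin.ext (by simp only [reattach]; split_ifs <;> omega)

theorem exists_realizesPath_reattachEdge (hE : realizesPath ℓ E) (hj : j + 1 < k)
    (he : e = s(ℓ ⟨j, by omega⟩, ℓ ⟨j + 1, hj⟩)) (r₁ r₂ : Bool) :
    ∃ m : Fin k ≃ V, realizesPath m ((E \ {e}) ∪ {reattachEdge ℓ hj r₁ r₂}) := by
  set π := reattachPerm (by omega : j < k) r₁ r₂
  have h₁ : π ⟨j, by omega⟩ = if r₁ then ⟨0, by omega⟩ else ⟨j, by omega⟩ := by
    cases r₁ <;> simp [π, reattachPerm, reattach]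
  have h₂ : π ⟨j + 1, hj⟩ = if r₂ then ⟨k - 1, by omega⟩ else ⟨j + 1, hj⟩ := by
    cases r₂ <;> simp [π, reattachPerm, reattach, show k + j - (j + 1) = k - 1 by omega]
  rw [reattachEdge, ← h₁, ← h₂]
  refine ⟨_, realizesPath_trans_of_involutive hE hj he (Function.Involutive.toPerm_involutive _)
    fun i hi hij => ?_⟩
  simp only [π, reattachPerm, Function.Involutive.coe_toPerm, reattach, SplitAdj]
  split_ifs <;> omega

theorem exists_realizesPath_replace_iff (hE : realizesPath ℓ E) (hj : j + 1 < k)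
    (he : e = s(ℓ ⟨j, by omega⟩, ℓ ⟨j + 1, hj⟩)) (e' : Sym2 V) :
    (∃ m : Fin k ≃ V, realizesPath m ((E \ {e}) ∪ {e'})) ↔
      ∃ r₁ r₂ : Bool, e' = reattachEdge ℓ hj r₁ r₂ :=
  ⟨fun ⟨_, hm⟩ => exists_eq_reattachEdge_of_realizesPath hE hj he hm,
    fun ⟨r₁, r₂, he'⟩ => he' ▸ exists_realizesPath_reattachEdge hE hj he r₁ r₂⟩

end Reattach

/-- Let `ℓ : Fin k ≃ V` (with `|V| = k ≥ 4`) realize the Hamiltonian path edge set `E`,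
and let `e = {ℓ j, ℓ (j+1)}` be an internal edge, i.e. `1 ≤ j ≤ k − 3`.  Then the
unordered pairs `e'` of distinct elements of `V` such that `(E \ {e}) ∪ {e'}` is realized
as a Hamiltonian path by some bijection are exactly the four pairs `{ℓ j, ℓ (j+1)}`,
`{ℓ 0, ℓ (j+1)}`, `{ℓ j, ℓ (k−1)}` and `{ℓ 0, ℓ (k−1)}`. -/
theorem internal_replacements {V : Type*} {k : ℕ}
    (ℓ : Fin k ≃ V) (E : Set (Sym2 V))
    (hE : realizesPath ℓ E)
    (j : ℕ) (hj1 : 1 ≤ j) (hj2 : j ≤ k - 3)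
    (e : Sym2 V) (he : e = s(ℓ ⟨j, by omega⟩, ℓ ⟨j + 1, by omega⟩)) :
    { e' : Sym2 V | ¬ e'.IsDiag ∧ ∃ m : Fin k ≃ V, realizesPath m ((E \ {e}) ∪ {e'}) }
        = {s(ℓ ⟨j, by omega⟩, ℓ ⟨j + 1, by omega⟩),
           s(ℓ ⟨0, by omega⟩, ℓ ⟨j + 1, by omega⟩),
           s(ℓ ⟨j, by omega⟩, ℓ ⟨k - 1, by omega⟩),
           s(ℓ ⟨0, by omega⟩, ℓ ⟨k - 1, by omega⟩)} ∧
      ({s(ℓ ⟨j, by omega⟩, ℓ ⟨j + 1, by omega⟩),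
        s(ℓ ⟨0, by omega⟩, ℓ ⟨j + 1, by omega⟩),
        s(ℓ ⟨j, by omega⟩, ℓ ⟨k - 1, by omega⟩),
        s(ℓ ⟨0, by omega⟩, ℓ ⟨k - 1, by omega⟩)} : Set (Sym2 V)).ncard = 4 := by
  have hj : j + 1 < k := by omega
  refine ⟨Set.ext fun e' => ?_, ?_⟩
  · rw [Set.mem_ofPred_eq, exists_realizesPath_replace_iff hE hj he]
    constructor
    · rintro ⟨-, r₁, r₂, rfl⟩
      cases r₁ <;> cases r₂ <;> simp [reattachEdge]
    · rintro (rfl | rfl | rfl | rfl) <;>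
        refine ⟨by simp only [Sym2.mk_isDiag_iff, ℓ.apply_eq_iff_eq, Fin.ext_iff]; omega, ?_⟩
      exacts [⟨false, false, rfl⟩, ⟨true, false, rfl⟩, ⟨false, true, rfl⟩, ⟨true, true, rfl⟩]
  · rw [Set.ncard_eq_four]
    refine ⟨_, _, _, _, ?_, ?_, ?_, ?_, ?_, ?_, rfl⟩ <;> simp [Fin.ext_iff] <;> omega
end

section
/- Let n ≥ 1 and let σ_x, σ_y, σ_z be permutations of Fin n. The subspace of (Fin n → ℝ)³ consisting of triples (a, b, c) with a ∈ cell(σ_x), b ∈ cell(σ_y) and c ∈ cell(σ_z) is homeomorphic to the threefold product of the open standard n-simplex with itself. (This is the paper's claim that the cellular decomposition of the space P_{n+1} of plumbers' maps is generated by open cells e(σ_x, σ_y, σ_z) homeomorphic to (Δⁿ)^{×3}, indexed by triples of permutations describing the order of the vertices projected to the x-, y-, and z-axes.) -/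
/-- The open standard `n`-simplex `{ x : Fin n → ℝ | (∀ i, 0 < x i) ∧ ∑ i, x i < 1 }`. -/
def openSimplex (n : ℕ) : Set (Fin n → ℝ) :=
  { x | (∀ i, 0 < x i) ∧ ∑ i, x i < 1 }

/-- The order cell of a permutation `σ` of `Fin n`:
`{ v | 0 < v (σ 0) < v (σ 1) < ⋯ < v (σ (n−1)) < 1 }`. -/
def cell {n : ℕ} (σ : Equiv.Perm (Fin n)) : Set (Fin n → ℝ) :=
  { v | (∀ h : 0 < n, 0 < v (σ ⟨0, h⟩)) ∧
        (∀ i : ℕ, ∀ h : i + 1 < n, v (σ ⟨i, Nat.lt_of_succ_lt h⟩) < v (σ ⟨i + 1, h⟩)) ∧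
        (∀ h : 0 < n, v (σ ⟨n - 1, Nat.sub_lt h one_pos⟩) < 1) }

namespace PlumbersAux

variable {n : ℕ}

/-- Partial sums. -/
def T (x : Fin n → ℝ) : Fin n → ℝ := fun i => ∑ j ∈ Finset.Iic i, x j

/-- Successive differences. -/
def D (y : Fin n → ℝ) : Fin n → ℝ := fun i =>
  if h : 0 < (i : ℕ) then
    y i - y ⟨(i : ℕ) - 1, lt_trans (Nat.sub_lt h one_pos) i.isLt⟩
  else y i

lemma Iic_zero (h : 0 < n) : Finset.Iic (⟨0, h⟩ : Fin n) = {⟨0, h⟩} := by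
  ext j; simp [Fin.le_def, Fin.ext_iff]

lemma Iic_succ (m : ℕ) (h : m + 1 < n) :
    Finset.Iic (⟨m + 1, h⟩ : Fin n) =
      insert ⟨m + 1, h⟩ (Finset.Iic ⟨m, Nat.lt_of_succ_lt h⟩) := by
  ext j; simp [Fin.le_def, Fin.ext_iff]; omega

lemma T_zero (x : Fin n → ℝ) (h : 0 < n) : T x ⟨0, h⟩ = x ⟨0, h⟩ := by
  simp [T, Iic_zero h]

lemma T_succ (x : Fin n → ℝ) (m : ℕ) (h : m + 1 < n) :
    T x ⟨m + 1, h⟩ = x ⟨m + 1, h⟩ + T x ⟨m, Nat.lt_of_succ_lt h⟩ := by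
  rw [T, Iic_succ m h, Finset.sum_insert (by simp [Fin.le_def])]
  rfl

lemma D_T (x : Fin n → ℝ) : D (T x) = x := by
  funext i
  rcases i with ⟨i, hi⟩
  cases i with
  | zero => simp [D, T_zero]
  | succ m => simp [D, T_succ x m hi]

lemma T_D (y : Fin n → ℝ) : T (D y) = y := by
  funext i
  rcases i with ⟨i, hi⟩
  induction i with
  | zero => simp [T_zero, D]
  | succ m ih =>
      rw [T_succ _ m hi, ih (Nat.lt_of_succ_lt hi)]
      simp [D]

lemma T_last (x : Fin n → ℝ) (h : 0 < n) :
    T x ⟨n - 1, Nat.sub_lt h one_pos⟩ = ∑ i, x i := by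
  rw [T]
  apply Finset.sum_subset (Finset.subset_univ _)
  intro j _ hj
  exfalso
  apply hj
  simp [Finset.mem_Iic, Fin.le_def]
  omega

lemma continuous_T : Continuous (T (n := n)) := by
  apply continuous_pi
  intro i
  exact continuous_finset_sum _ fun j _ => continuous_apply j

lemma continuous_D : Continuous (D (n := n)) := by
  apply continuous_pi
  intro i
  unfold D
  split
  · exact (continuous_apply i).sub (continuous_apply _)
  · exact continuous_apply i

/-- The key homeomorphism of ℝⁿ: partial sums, then reindex by σ. -/
def E (σ : Equiv.Perm (Fin n)) : (Fin n → ℝ) ≃ₜ (Fin n → ℝ) where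
  toFun x := fun k => T x (σ.symm k)
  invFun v := D (fun i => v (σ i))
  left_inv x := by simp [D_T]
  right_inv v := by
    funext k
    show T (D fun i => v (σ i)) (σ.symm k) = v k
    rw [T_D]
    simp
  continuous_toFun := by
    apply continuous_pi
    intro k
    exact (continuous_apply (σ.symm k)).comp continuous_T
  continuous_invFun :=
    continuous_D.comp (continuous_pi fun i => continuous_apply (σ i))

lemma E_mem (σ : Equiv.Perm (Fin n)) (x : Fin n → ℝ) :
    E σ x ∈ cell σ ↔ x ∈ openSimplex n := by
  have key : ∀ i : Fin n, E σ x (σ i) = T x i := by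
    intro i; show T x (σ.symm (σ i)) = T x i; rw [Equiv.symm_apply_apply]
  constructor
  · rintro ⟨h0, hstep, hlast⟩
    constructor
    · intro i
      rcases i with ⟨i, hi⟩
      cases i with
      | zero =>
          have := h0 hi
          rwa [key, T_zero] at this
      | succ m =>
          have := hstep m hi
          rw [key, key, T_succ x m hi] at this
          linarith
    · rcases Nat.eq_zero_or_pos n with h0n | h0n
      · subst h0n; simp
      · have := hlast h0n
        rwa [key, T_last x h0n] at this
  · rintro ⟨hpos, hsum⟩
    refine ⟨?_, ?_, ?_⟩
    · intro h; rw [key, T_zero]; exact hpos _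
    · intro i h
      rw [key, key, T_succ x i h]
      have := hpos ⟨i + 1, h⟩
      linarith
    · intro h; rw [key, T_last x h]; exact hsum



lemma E_image (σ : Equiv.Perm (Fin n)) : E σ '' openSimplex n = cell σ := by
  ext v
  constructor
  · rintro ⟨x, hx, rfl⟩
    exact (E_mem σ x).2 hx
  · intro hv
    refine ⟨(E σ).symm v, ?_, (E σ).apply_symm_apply v⟩
    have := (E_mem σ ((E σ).symm v))
    rw [(E σ).apply_symm_apply] at this
    exact this.1 hv

/-- The order cell is homeomorphic to the open simplex. -/
def cellHomeo (σ : Equiv.Perm (Fin n)) : (cell σ) ≃ₜ (openSimplex n) :=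
  (((E σ).image (openSimplex n)).trans (Homeomorph.setCongr (E_image σ))).symm

end PlumbersAux

/-- For `n ≥ 1` and permutations `σ_x, σ_y, σ_z` of `Fin n`, the subspace of
`(Fin n → ℝ)³` of triples `(a, b, c)` with `a ∈ cell σ_x`, `b ∈ cell σ_y`,
`c ∈ cell σ_z` is homeomorphic to the threefold product of the open standard
`n`-simplex with itself: the open cells `e(σ_x, σ_y, σ_z)` of the space of plumbers'
maps are homeomorphic to `(Δⁿ)^{×3}`. -/
theorem plumbersCell_homeomorph_simplexCube (n : ℕ) (hn : 1 ≤ n)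
    (σx σy σz : Equiv.Perm (Fin n)) :
    Nonempty (
      ({ p : (Fin n → ℝ) × (Fin n → ℝ) × (Fin n → ℝ) |
          p.1 ∈ cell σx ∧ p.2.1 ∈ cell σy ∧ p.2.2 ∈ cell σz } :
        Set ((Fin n → ℝ) × (Fin n → ℝ) × (Fin n → ℝ)))
      ≃ₜ
      ({ p : (Fin n → ℝ) × (Fin n → ℝ) × (Fin n → ℝ) |
          p.1 ∈ openSimplex n ∧ p.2.1 ∈ openSimplex n ∧ p.2.2 ∈ openSimplex n } :
        Set ((Fin n → ℝ) × (Fin n → ℝ) × (Fin n → ℝ)))) := by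
  have hA : ({ p : (Fin n → ℝ) × (Fin n → ℝ) × (Fin n → ℝ) |
      p.1 ∈ cell σx ∧ p.2.1 ∈ cell σy ∧ p.2.2 ∈ cell σz } :
      Set ((Fin n → ℝ) × (Fin n → ℝ) × (Fin n → ℝ))) =
      cell σx ×ˢ (cell σy ×ˢ cell σz) := by
    ext p; simp [Set.mem_prod]
  have hB : ({ p : (Fin n → ℝ) × (Fin n → ℝ) × (Fin n → ℝ) |
      p.1 ∈ openSimplex n ∧ p.2.1 ∈ openSimplex n ∧ p.2.2 ∈ openSimplex n } :
      Set ((Fin n → ℝ) × (Fin n → ℝ) × (Fin n → ℝ))) =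
      openSimplex n ×ˢ (openSimplex n ×ˢ openSimplex n) := by
    ext p; simp [Set.mem_prod]
  exact ⟨(Homeomorph.setCongr hA).trans <|
    (Homeomorph.Set.prod _ _).trans <|
    ((PlumbersAux.cellHomeo σx).prodCongr
      ((Homeomorph.Set.prod _ _).trans <|
        ((PlumbersAux.cellHomeo σy).prodCongr (PlumbersAux.cellHomeo σz)).trans
          (Homeomorph.Set.prod _ _).symm)).trans <|
    (Homeomorph.Set.prod _ _).symm.trans (Homeomorph.setCongr hB.symm)⟩
end

section
/- Fix m ≥ 1. For a configuration v = (v₁, …, v_{m−1}) ∈ ((0,1)³)^{m−1}, set v₀ = (0,0,0) and v_m = (1,1,1), and for 0 ≤ j ≤ m−1 define the three pipes of the (j+1)st move as the closed segments in ℝ³: the x-pipe from (x_j, y_j, z_j) to (x_{j+1}, y_j, z_j), the y-pipe from (x_{j+1}, y_j, z_j) to (x_{j+1}, y_{j+1}, z_j), and the z-pipe from (x_{j+1}, y_{j+1}, z_j) to (x_{j+1}, y_{j+1}, z_{j+1}), where v_j = (x_j, y_j, z_j). Order all pipes by position: the x-, y-, z-pipes of move j+1 have positions 3j, 3j+1,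 3j+2; two pipes are distant if their positions differ by at least 4. If v is singular, i.e. some pair of distant pipes intersects, then there exist indices j ≠ j′ in {0, 1, …, m} and a coordinate direction d ∈ {x, y, z} such that the d-coordinates of v_j and v_{j′} are equal. (This is the content of the paper's proposition that the discriminant S_m is the colimit of the coincidence functor B_m: every singular plumbers' map respects at least one nonempty collection of coordinate coincidences among its vertices.) -/
/-- The point agreeing with `b` in coordinates `< r` and with `a` in coordinates `≥ r`.
For `r = 0,…,3` these are the successive corners `(aₓ,a_y,a_z)`, `(bₓ,a_y,a_z)`,
`(bₓ,b_y,a_z)`, `(bₓ,b_y,b_z)` of the three pipes joining vertex `a` to vertex `b`. -/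
def mixPt (a b : Fin 3 → ℝ) (r : ℕ) : Fin 3 → ℝ :=
  fun c => if (c : ℕ) < r then b c else a c

/-- The `j`-th vertex of the plumbers' curve with interior vertices `v`, where
`vert m v 0 = (0,0,0)` and `vert m v j = (1,1,1)` for `j ≥ m`. -/
def vert (m : ℕ) (v : Fin (m - 1) → (Fin 3 → ℝ)) (j : ℕ) : Fin 3 → ℝ :=
  if h0 : j = 0 then 0 else if h : j < m then v ⟨j - 1, by omega⟩ else 1

/-- The pipe at position `p`: positions `3j, 3j+1, 3j+2` are the `x`-, `y`- and
`z`-pipes of the `(j+1)`st move, the closed axis-parallel segments joining the successive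
corners between the vertices `vert m v j` and `vert m v (j+1)`. -/
def pipe (m : ℕ) (v : Fin (m - 1) → (Fin 3 → ℝ)) (p : ℕ) : Set (Fin 3 → ℝ) :=
  segment ℝ (mixPt (vert m v (p / 3)) (vert m v (p / 3 + 1)) (p % 3))
            (mixPt (vert m v (p / 3)) (vert m v (p / 3 + 1)) (p % 3 + 1))

lemma seg_coord {a b w : Fin 3 → ℝ} (h : w ∈ segment ℝ a b) (c : Fin 3)
    (hab : a c = b c) : w c = a c := by
  obtain ⟨t₁, t₂, _, _, h3, h4⟩ := h
  have h5 := congrFun h4 c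
  simp only [Pi.add_apply, Pi.smul_apply, smul_eq_mul] at h5
  rw [← h5, hab, ← add_mul, h3, one_mul]

lemma pipe_coord (m : ℕ) (v : Fin (m - 1) → (Fin 3 → ℝ)) (p : ℕ) (c : Fin 3)
    (hc : (c : ℕ) ≠ p % 3) {w : Fin 3 → ℝ} (hw : w ∈ pipe m v p) :
    w c = if (c : ℕ) < p % 3 then vert m v (p / 3 + 1) c else vert m v (p / 3) c := by
  rw [pipe] at hw
  have hab : mixPt (vert m v (p / 3)) (vert m v (p / 3 + 1)) (p % 3) c
      = mixPt (vert m v (p / 3)) (vert m v (p / 3 + 1)) (p % 3 + 1) c := by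
    unfold mixPt
    by_cases h : (c : ℕ) < p % 3
    · simp [h, Nat.lt_succ_of_lt h]
    · have h' : ¬ (c : ℕ) < p % 3 + 1 := by omega
      simp [h, h']
  rw [seg_coord hw c hab]
  rfl

/-- If a configuration `v` of `m − 1` vertices in `(0,1)³` is singular—some pair of
distant pipes (positions differing by at least 4) intersects—then there are two distinct
vertex indices `j ≠ j'` in `{0, 1, …, m}` and a coordinate direction `d` such that the
`d`-coordinates of the `j`-th and `j'`-th vertices coincide: every singular plumbers'
map respects at least one nonempty collection of coordinate coincidences, which is the
content of `S_m = colim B_m`. -/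
theorem singular_implies_coincidence (m : ℕ) (hm : 1 ≤ m)
    (v : Fin (m - 1) → (Fin 3 → ℝ))
    (hv : ∀ j c, v j c ∈ Set.Ioo (0 : ℝ) 1)
    (hsing : ∃ p p' : ℕ, p + 4 ≤ p' ∧ p' < 3 * m ∧
      (pipe m v p ∩ pipe m v p').Nonempty) :
    ∃ j j' : ℕ, j ≤ m ∧ j' ≤ m ∧ j ≠ j' ∧
      ∃ d : Fin 3, vert m v j d = vert m v j' d := by
  obtain ⟨p, p', hpp, hpm, w, hw, hw'⟩ := hsing
  have hr : p % 3 < 3 := Nat.mod_lt _ (by norm_num)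
  have hr' : p' % 3 < 3 := Nat.mod_lt _ (by norm_num)
  -- choose a coordinate different from both pipe directions
  set cn : ℕ := if p % 3 ≠ 0 ∧ p' % 3 ≠ 0 then 0
    else if p % 3 ≠ 1 ∧ p' % 3 ≠ 1 then 1 else 2 with hcn
  have hcprop : cn ≠ p % 3 ∧ cn ≠ p' % 3 ∧ cn < 3 := by
    rw [hcn]; split_ifs <;> omega
  obtain ⟨hc1, hc2, hc3⟩ := hcprop
  set c : Fin 3 := ⟨cn, hc3⟩ with hcdef
  have h1 := pipe_coord m v p c hc1 hw
  have h2 := pipe_coord m v p' c hc2 hw'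
  rw [h2] at h1
  have hcval : (c : ℕ) = cn := rfl
  have hjlt : p / 3 < p' / 3 := by omega
  have hjm : p' / 3 + 1 ≤ m := by omega
  split_ifs at h1 with ha hb hb
  · exact ⟨p' / 3 + 1, p / 3 + 1, by omega, by omega, by omega, c, h1⟩
  · exact ⟨p' / 3 + 1, p / 3, by omega, by omega, by omega, c, h1⟩
  · refine ⟨p' / 3, p / 3 + 1, by omega, by omega, ?_, c, h1⟩
    omega
  · exact ⟨p' / 3, p / 3, by omega, by omega, by omega, c, h1⟩
end
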